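/- arXiv:1910.00893 — 5 statements merged into one kernel-verified Lean document; each statement's English description precedes it below -/
import Mathlib

section
/- The permanent of a positive semidefinite Hermitian matrix is a nonnegative real number. In particular, for any vectors α₁,…,α_n in a complex inner product space, the permanent of the Gram matrix G_{jk} = ⟨α_j, α_k⟩ is nonnegative. -/
/-!
Writing a positive semidefinite `M` as `Bᴴ * B`, expanding the product and summing over all
row selections `f` turns `n! · per (Bᴴ * B)` into `∑_f |per (B.submatrix f id)|²`, a sum of
squared moduli. Gram matrices are positive semidefinite, so they are a special case.
-/

open scoped ComplexOrder
open Equiv Finset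

namespace Matrix

variable {m n : Type*} [Fintype n] [DecidableEq n]

section CommSemiring

variable {R : Type*} [CommSemiring R]

theorem permanent_submatrix_id_eq_sum (A : Matrix m n R) (f : n → m) :
    (A.submatrix f id).permanent = ∑ σ : Perm n, ∏ i, A (f i) (σ i) := by
  rw [← permanent_transpose]
  rfl

theorem factorial_mul_permanent_conjTranspose_mul_self [StarRing R] [Fintype m]
    (B : Matrix m n R) :
    (Fintype.card n).factorial * (Bᴴ * B).permanent =
      ∑ f : n → m, star (B.submatrix f id).permanent * (B.submatrix f id).permanent := by
  symm
  calc ∑ f : n → m, star (B.submatrix f id).permanent * (B.submatrix f id).permanent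
      = ∑ f : n → m, ∑ σ : Perm n, ∑ τ : Perm n, ∏ i, star (B (f i) (σ i)) * B (f i) (τ i) := by
        simp_rw [permanent_submatrix_id_eq_sum, star_sum, star_prod, sum_mul_sum,
          prod_mul_distrib]
    _ = ∑ σ : Perm n, ∑ τ : Perm n, ∏ i, (Bᴴ * B) (σ i) (τ i) := by
        rw [sum_comm]
        refine sum_congr rfl fun σ _ => ?_
        rw [sum_comm]
        refine sum_congr rfl fun τ _ => ?_
        simp_rw [mul_apply, conjTranspose_apply]
        exact (Fintype.prod_sum fun i k => star (B k (σ i)) * B k (τ i)).symm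
    _ = ∑ _τ : Perm n, (Bᴴ * B).permanent := by
        rw [sum_comm]
        exact sum_congr rfl fun τ _ => permanent_permute_rows τ (Bᴴ * B)
    _ = (Fintype.card n).factorial * (Bᴴ * B).permanent := by
        rw [sum_const, card_univ, Fintype.card_perm, nsmul_eq_mul]

end CommSemiring

variable {𝕜 : Type*} [RCLike 𝕜]

theorem permanent_conjTranspose_mul_self_nonneg [Fintype m] (B : Matrix m n 𝕜) :
    0 ≤ (Bᴴ * B).permanent := by
  have hfac : (0 : 𝕜) < (Fintype.card n).factorial := by exact_mod_cast Nat.factorial_pos _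
  refine le_of_mul_le_mul_left ?_ hfac
  rw [mul_zero, factorial_mul_permanent_conjTranspose_mul_self]
  exact sum_nonneg fun f _ => star_mul_self_nonneg _

open scoped MatrixOrder in
theorem PosSemidef.permanent_nonneg {M : Matrix n n 𝕜} (hM : M.PosSemidef) :
    0 ≤ M.permanent := by
  obtain ⟨B, rfl⟩ := CStarAlgebra.nonneg_iff_eq_star_mul_self.mp hM.nonneg
  exact permanent_conjTranspose_mul_self_nonneg B

end Matrix

theorem permanent_posSemidef_nonneg {n : ℕ}
    (M : Matrix (Fin n) (Fin n) ℂ) (hM : M.PosSemidef)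
    (E : Type*) [NormedAddCommGroup E] [InnerProductSpace ℂ E] (α : Fin n → E) :
    (0 ≤ (M.permanent).re ∧ (M.permanent).im = 0) ∧
      (0 ≤ ((Matrix.of fun j k => (inner ℂ (α j) (α k) : ℂ)).permanent).re ∧
        ((Matrix.of fun j k => (inner ℂ (α j) (α k) : ℂ)).permanent).im = 0) :=
  ⟨RCLike.nonneg_iff.mp hM.permanent_nonneg,
    RCLike.nonneg_iff.mp (Matrix.posSemidef_gram ℂ α).permanent_nonneg⟩
end

section
/- Fix l > 0, β ∈ ℝ, N ∈ ℕ, and let Ω_N(x₁,…,x_N) = ∏_{1 ≤ j < k ≤ N} (sin(π(x_j − x_k)/l))^β on the open region 0 < x_N < ⋯ < x₁ < l. Then Ω_N is an eigenfunction of the Calogero–Moser–Sutherland Hamiltonian H_N = −Σ_j ∂²/∂x_j² + Σ_{j ≠ k} π²β(β−1) / (l² sin²(π(x_j − x_k)/l)), with eigenvalue E_N = (πβ/l)² · N(N² − 1)/3. -/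
open Real Finset

/-!
On the ordered region every `sin (π (x_j - x_k) / l)` with `j < k` is positive, so near `x`
we have `Ω = exp (β F)` with `F = ∑_{j<k} log sin (c (x_j - x_k))`, `c = π / l`. Hence
`∂_j² Ω = Ω (β ∂_j² F + β² (∂_j F)²)`, where `∂_j F = c ∑_{k≠j} cot_{jk}` and
`∂_j² F = -c² ∑_{k≠j} (1 + cot_{jk}²)`. Writing the potential as `β (β - 1) c² (1 + cot²)`,
the left-hand side becomes `β² c² Ω (N (N - 1) + ∑_{j≠k} cot_{jk}² - ∑_j (∑_{k≠j} cot_{jk})²)`.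
The cross terms of the square run over ordered triples of distinct indices; summing each over
its three cyclic relabellings and using `cot A cot B + cot B cot C + cot C cot A = 1` for
`A + B + C = 0` shows that they add up to `-N (N - 1) (N - 2) / 3`.
-/

open Filter Topology

lemma Real.cot_neg (x : ℝ) : cot (-x) = -cot x := by
  simp [cot_eq_cos_div_sin, div_neg]

lemma Real.one_div_sin_sq_eq_one_add_cot_sq {x : ℝ} (hx : sin x ≠ 0) :
    1 / sin x ^ 2 = 1 + cot x ^ 2 := by
  rw [cot_eq_cos_div_sin]
  field_simp
  linarith [sin_sq_add_cos_sq x]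

lemma Real.hasDerivAt_cot {x : ℝ} (hx : sin x ≠ 0) : HasDerivAt cot (-(1 + cot x ^ 2)) x := by
  have h := (hasDerivAt_cos x).div (hasDerivAt_sin x) hx
  rw [show (cos / sin : ℝ → ℝ) = cot from funext fun y => (cot_eq_cos_div_sin y).symm] at h
  refine h.congr_deriv ?_
  rw [← one_div_sin_sq_eq_one_add_cot_sq hx]
  field_simp
  linarith [sin_sq_add_cos_sq x]

lemma Real.cot_sub_mul_cot_sub_cyclic {a b d : ℝ} (hab : sin (a - b) ≠ 0)
    (had : sin (a - d) ≠ 0) (hbd : sin (b - d) ≠ 0) :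
    cot (a - b) * cot (a - d) + cot (b - a) * cot (b - d) + cot (d - a) * cot (d - b) = -1 := by
  rw [show b - a = -(a - b) by ring, show d - a = -(a - d) by ring,
    show d - b = -(b - d) by ring, cot_neg, cot_neg, cot_neg]
  rw [show a - d = (a - b) + (b - d) by ring] at had ⊢
  simp only [cot_eq_cos_div_sin]
  rw [sin_add] at had ⊢
  rw [cos_add]
  field_simp
  ring

lemma Real.sin_pi_div_mul_sub_pos {l u v : ℝ} (hl : 0 < l) (hv : 0 < v) (hu : u < l)
    (hvu : v < u) : 0 < sin (π / l * (u - v)) := by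
  apply sin_pos_of_pos_of_lt_pi (mul_pos (div_pos pi_pos hl) (sub_pos.2 hvu))
  rw [div_mul_eq_mul_div, div_lt_iff₀ hl]
  nlinarith [pi_pos]

section DistinctIndices

variable {ι : Type*} [Fintype ι] [DecidableEq ι]

lemma sum_sum_erase_one :
    ∑ j : ι, ∑ _k ∈ univ.erase j, (1 : ℝ) = Fintype.card ι * (Fintype.card ι - 1) := by
  rcases isEmpty_or_nonempty ι with h | h
  · simp
  · simp [card_erase_of_mem, Nat.cast_sub Fintype.card_pos]
    ring

lemma sum_sum_erase_sum_erase_erase_one :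
    ∑ j : ι, ∑ k ∈ univ.erase j, ∑ _m ∈ (univ.erase j).erase k, (1 : ℝ) =
      Fintype.card ι * (Fintype.card ι - 1) * (Fintype.card ι - 2) := by
  have hcard : ∀ j : ι, ∀ k ∈ univ.erase j,
      ∑ _m ∈ (univ.erase j).erase k, (1 : ℝ) = Fintype.card ι - 2 := by
    intro j k hk
    have h2 : 2 ≤ Fintype.card ι :=
      Fintype.one_lt_card_iff.mpr ⟨j, k, (ne_of_mem_erase hk).symm⟩
    rw [sum_const, card_erase_of_mem hk, card_erase_of_mem (mem_univ j), card_univ, nsmul_one,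
      Nat.sub_sub, Nat.cast_sub h2]
    norm_num
  rw [sum_congr rfl fun j _ => sum_congr rfl (hcard j), ← sum_sum_erase_one, sum_mul]
  exact sum_congr rfl fun j _ => by rw [sum_mul, one_mul]

lemma sum_sum_erase_sum_erase_erase_rotate (f : ι → ι → ι → ℝ) :
    ∑ j, ∑ k ∈ univ.erase j, ∑ m ∈ (univ.erase j).erase k, f j k m =
      ∑ j, ∑ k ∈ univ.erase j, ∑ m ∈ (univ.erase j).erase k, f m j k := by
  rw [sum_comm' (t' := univ) (s' := fun k => univ.erase k) (by simp [ne_comm])]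
  exact sum_congr rfl fun k _ => sum_comm' (by simp; tauto)

lemma sq_sum_erase (t : ι → ι → ℝ) (j : ι) :
    (∑ k ∈ univ.erase j, t j k) ^ 2 =
      ∑ k ∈ univ.erase j, (t j k ^ 2 + ∑ m ∈ (univ.erase j).erase k, t j k * t j m) := by
  rw [sq, sum_mul_sum]
  refine sum_congr rfl fun k hk => ?_
  rw [← add_sum_erase _ _ hk, sq]

lemma sum_sq_sum_erase_of_cyclic (t : ι → ι → ℝ)
    (ht : ∀ j k m, j ≠ k → j ≠ m → k ≠ m →
      t j k * t j m + t k j * t k m + t m j * t m k = -1) :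
    ∑ j, (∑ k ∈ univ.erase j, t j k) ^ 2 =
      ∑ j, ∑ k ∈ univ.erase j, t j k ^ 2 -
        Fintype.card ι * (Fintype.card ι - 1) * (Fintype.card ι - 2) / 3 := by
  set C := ∑ j, ∑ k ∈ univ.erase j, ∑ m ∈ (univ.erase j).erase k, t j k * t j m
  have hC : 3 * C = -(Fintype.card ι * (Fintype.card ι - 1) * (Fintype.card ι - 2)) := by
    have hrot₁ := sum_sum_erase_sum_erase_erase_rotate fun j k m => t j k * t j m
    have hrot₂ := sum_sum_erase_sum_erase_erase_rotate fun j k m => t k j * t k m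
    simp only [mul_comm (t _ _) (t _ _)] at hrot₂
    have hcyc : ∑ j, ∑ k ∈ univ.erase j, ∑ m ∈ (univ.erase j).erase k,
        (t j k * t j m + t k j * t k m + t m j * t m k) =
          ∑ j : ι, ∑ k ∈ univ.erase j, ∑ _m ∈ (univ.erase j).erase k, (-1 : ℝ) := by
      refine sum_congr rfl fun j _ => sum_congr rfl fun k hk => sum_congr rfl fun m hm => ?_
      simp only [mem_erase] at hk hm
      exact ht j k m hk.1.symm hm.2.1.symm hm.1.symm
    simp only [sum_add_distrib, sum_neg_distrib, sum_sum_erase_sum_erase_erase_one] at hcyc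
    linarith
  simp only [sq_sum_erase, sum_add_distrib]
  linarith

lemma sum_sq_sum_erase_cot_mul_sub {c : ℝ} {x : ι → ℝ}
    (hx : ∀ a b, a ≠ b → sin (c * (x a - x b)) ≠ 0) :
    ∑ j, (∑ k ∈ univ.erase j, cot (c * (x j - x k))) ^ 2 =
      ∑ j, ∑ k ∈ univ.erase j, cot (c * (x j - x k)) ^ 2 -
        Fintype.card ι * (Fintype.card ι - 1) * (Fintype.card ι - 2) / 3 := by
  refine sum_sq_sum_erase_of_cyclic _ fun j k m hjk hjm hkm => ?_
  simp only [mul_sub] at hx ⊢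
  exact cot_sub_mul_cot_sub_cyclic (hx j k hjk) (hx j m hjm) (hx k m hkm)

end DistinctIndices

lemma fderiv_fderiv_apply_of_eventuallyEq_exp {E : Type*} [NormedAddCommGroup E]
    [NormedSpace ℝ E] {Ω F : E → ℝ} {F' : E → E →L[ℝ] ℝ} {D : E →L[ℝ] ℝ} {x : E} (β : ℝ) (v : E)
    (hΩ : Ω =ᶠ[𝓝 x] fun y => exp (β * F y))
    (hF : ∀ᶠ y in 𝓝 x, HasFDerivAt F (F' y) y)
    (hD : HasFDerivAt (fun y => F' y v) D x) :
    fderiv ℝ (fun y => fderiv ℝ Ω y v) x v = Ω x * (β * D v + (β * F' x v) ^ 2) := by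
  have hfirst : (fun y => fderiv ℝ Ω y v) =ᶠ[𝓝 x] fun y => β * exp (β * F y) * F' y v := by
    filter_upwards [hΩ.eventuallyEq_nhds, hF] with y hΩy hFy
    rw [hΩy.fderiv_eq, ((hFy.const_mul β).exp).fderiv]
    simp only [smul_apply, smul_eq_mul]
    ring
  have hsecond := ((hF.self_of_nhds.const_mul β).exp.const_mul β).fun_mul hD
  rw [hfirst.fderiv_eq, hsecond.fderiv, hΩ.eq_of_nhds]
  simp only [add_apply, smul_apply, smul_eq_mul]
  ring

def projSub {ι : Type*} (a b : ι) : (ι → ℝ) →L[ℝ] ℝ :=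
  ContinuousLinearMap.proj (R := ℝ) (φ := fun _ => ℝ) a - ContinuousLinearMap.proj b

@[simp]
lemma projSub_apply {ι : Type*} (a b : ι) (y : ι → ℝ) : projSub a b y = y a - y b := rfl

lemma hasFDerivAt_mul_sub {ι : Type*} [Fintype ι] (c : ℝ) (a b : ι) (y : ι → ℝ) :
    HasFDerivAt (fun z : ι → ℝ => c * (z a - z b)) (c • projSub a b) y := by
  have hsub : HasFDerivAt (fun z : ι → ℝ => z a - z b) (projSub a b) y :=
    (projSub a b).hasFDerivAt
  exact hsub.const_mul c

lemma sin_mul_sub_ne_zero {ι : Type*} [LinearOrder ι] {c : ℝ} {x : ι → ℝ}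
    (hx : ∀ a b, a < b → 0 < sin (c * (x a - x b))) {a b : ι} (hab : a ≠ b) :
    sin (c * (x a - x b)) ≠ 0 := by
  rcases hab.lt_or_gt with h | h
  · exact (hx a b h).ne'
  · rw [← neg_sub, mul_neg, sin_neg, neg_ne_zero]
    exact (hx b a h).ne'

def ltPairs (ι : Type*) [Fintype ι] [LinearOrder ι] : Finset (ι × ι) :=
  univ.filter fun p => p.1 < p.2

section Jastrow

variable {ι : Type*} [Fintype ι] [LinearOrder ι]

noncomputable def logJastrow (c : ℝ) (y : ι → ℝ) : ℝ :=
  ∑ p ∈ ltPairs ι, log (sin (c * (y p.1 - y p.2)))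

noncomputable def logJastrowDeriv (c : ℝ) (y : ι → ℝ) : (ι → ℝ) →L[ℝ] ℝ :=
  ∑ p ∈ ltPairs ι, (c * cot (c * (y p.1 - y p.2))) • projSub p.1 p.2

lemma sum_ltPairs_mul_single_sub (w : ι → ι → ℝ) (hw : ∀ a b, w b a = -w a b) (j : ι) :
    ∑ p ∈ ltPairs ι, w p.1 p.2 * ((Pi.single j 1 : ι → ℝ) p.1 - (Pi.single j 1 : ι → ℝ) p.2) =
      ∑ k ∈ univ.erase j, w j k := by
  have hsplit : ∀ a b, (if a < b then
      w a b * ((Pi.single j 1 : ι → ℝ) a - (Pi.single j 1 : ι → ℝ) b) else 0) =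
        (if a = j then (if j < b then w j b else 0) else 0) +
          (if b = j then (if a < j then w j a else 0) else 0) := by
    intro a b
    rcases eq_or_ne a j with ha | ha <;> rcases eq_or_ne b j with hb | hb
    · simp [ha, hb]
    · simp [ha, hb]
    · simp [ha, hb, hw a j]
    · simp [ha, hb]
  rw [ltPairs, sum_filter, Fintype.sum_prod_type]
  simp only [hsplit, sum_add_distrib, sum_ite_eq', mem_univ, if_true]
  rw [sum_comm]
  simp only [sum_ite_eq', mem_univ, if_true, ← sum_add_distrib]
  rw [← filter_ne' univ j, sum_filter]
  refine sum_congr rfl fun k _ => ?_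
  rcases lt_trichotomy j k with h | rfl | h
  · simp [h, h.ne', h.not_gt]
  · simp
  · simp [h, h.ne, h.not_gt]

lemma prod_rpow_eventuallyEq_exp_logJastrow {c : ℝ} (β : ℝ) {x : ι → ℝ}
    (hx : ∀ a b, a < b → 0 < sin (c * (x a - x b))) :
    (fun y => ∏ p ∈ ltPairs ι, sin (c * (y p.1 - y p.2)) ^ β) =ᶠ[𝓝 x]
      fun y => exp (β * logJastrow c y) := by
  have hpos : ∀ᶠ y in 𝓝 x, ∀ p ∈ ltPairs ι, 0 < sin (c * (y p.1 - y p.2)) :=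
    (eventually_all_finset _).2 fun p hp =>
      (by fun_prop : Continuous fun y : ι → ℝ => sin (c * (y p.1 - y p.2))).continuousAt.eventually
        (lt_mem_nhds (hx _ _ (mem_filter.1 hp).2))
  filter_upwards [hpos] with y hy
  rw [logJastrow, mul_sum, exp_sum]
  exact prod_congr rfl fun p hp => by rw [rpow_def_of_pos (hy p hp), mul_comm]

lemma hasFDerivAt_logJastrow (c : ℝ) {y : ι → ℝ}
    (hy : ∀ p ∈ ltPairs ι, sin (c * (y p.1 - y p.2)) ≠ 0) :
    HasFDerivAt (logJastrow c) (logJastrowDeriv c y) y := by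
  refine HasFDerivAt.fun_sum fun p hp => ?_
  refine (((hasDerivAt_sin _).log (hy p hp)).comp_hasFDerivAt y
    (hasFDerivAt_mul_sub c p.1 p.2 y)).congr_fderiv ?_
  rw [smul_smul, cot_eq_cos_div_sin, mul_comm]

lemma logJastrowDeriv_single (c : ℝ) (y : ι → ℝ) (j : ι) :
    logJastrowDeriv c y (Pi.single j 1) = c * ∑ k ∈ univ.erase j, cot (c * (y j - y k)) := by
  rw [mul_sum, ← sum_ltPairs_mul_single_sub (fun a b => c * cot (c * (y a - y b)))]
  · simp [logJastrowDeriv]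
  · intro a b
    rw [← neg_sub, mul_neg, cot_neg, mul_neg]

lemma hasFDerivAt_mul_sum_cot_sub (c : ℝ) {y : ι → ℝ} (j : ι)
    (hy : ∀ k, k ≠ j → sin (c * (y j - y k)) ≠ 0) :
    HasFDerivAt (fun z : ι → ℝ => c * ∑ k ∈ univ.erase j, cot (c * (z j - z k)))
      (∑ k ∈ univ.erase j, (-(c ^ 2 * (1 + cot (c * (y j - y k)) ^ 2))) • projSub j k) y := by
  have hcot : ∀ k ∈ univ.erase j, HasFDerivAt (fun z : ι → ℝ => cot (c * (z j - z k)))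
      ((-(1 + cot (c * (y j - y k)) ^ 2)) • c • projSub j k) y := fun k hk =>
    (hasDerivAt_cot (hy k (ne_of_mem_erase hk))).comp_hasFDerivAt
      (f := fun z : ι → ℝ => c * (z j - z k)) y (hasFDerivAt_mul_sub c j k y)
  refine ((HasFDerivAt.fun_sum hcot).const_mul c).congr_fderiv ?_
  rw [smul_sum]
  refine sum_congr rfl fun k _ => ?_
  rw [smul_smul, smul_smul]
  congr 1
  ring

lemma fderiv_fderiv_single_of_eventuallyEq_exp_logJastrow {c β : ℝ} {x : ι → ℝ}
    {Ω : (ι → ℝ) → ℝ} (hx : ∀ a b, a ≠ b → sin (c * (x a - x b)) ≠ 0)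
    (hΩ : Ω =ᶠ[𝓝 x] fun y => exp (β * logJastrow c y)) (j : ι) :
    fderiv ℝ (fun y => fderiv ℝ Ω y (Pi.single j 1)) x (Pi.single j 1) =
      c ^ 2 * Ω x * (β ^ 2 * (∑ k ∈ univ.erase j, cot (c * (x j - x k))) ^ 2 -
        β * ∑ k ∈ univ.erase j, (1 + cot (c * (x j - x k)) ^ 2)) := by
  have hF : ∀ᶠ y in 𝓝 x, HasFDerivAt (logJastrow c) (logJastrowDeriv c y) y := by
    have hsin : ∀ᶠ y in 𝓝 x, ∀ p ∈ ltPairs ι, sin (c * (y p.1 - y p.2)) ≠ 0 :=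
      (eventually_all_finset _).2 fun p hp =>
        (by fun_prop : Continuous fun y : ι → ℝ => sin (c * (y p.1 - y p.2))).continuousAt
          |>.eventually_ne (hx _ _ (mem_filter.1 hp).2.ne)
    exact hsin.mono fun y hy => hasFDerivAt_logJastrow c hy
  have hD := hasFDerivAt_mul_sum_cot_sub c j fun k hk => hx j k hk.symm
  simp only [← logJastrowDeriv_single] at hD
  rw [fderiv_fderiv_apply_of_eventuallyEq_exp β _ hΩ hF hD, logJastrowDeriv_single]
  have hsingle : ∀ k ∈ univ.erase j, (Pi.single j 1 : ι → ℝ) j - (Pi.single j 1 : ι → ℝ) k = 1 :=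
    fun k hk => by simp [ne_of_mem_erase hk]
  simp only [_root_.sum_apply, smul_apply, projSub_apply, smul_eq_mul]
  rw [sum_congr rfl fun k hk => by rw [hsingle k hk, mul_one], sum_neg_distrib, ← mul_sum]
  ring

end Jastrow

theorem CMS_ground_state_eigenfunction
    (l β : ℝ) (hl : 0 < l) (N : ℕ)
    (Ω : (Fin N → ℝ) → ℝ)
    (hΩ : ∀ x, Ω x = ∏ p ∈ Finset.univ.filter (fun p : Fin N × Fin N => p.1 < p.2),
      Real.sin (Real.pi * (x p.1 - x p.2) / l) ^ β)
    (x : Fin N → ℝ)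
    (hx : (∀ j, 0 < x j ∧ x j < l) ∧ ∀ j k : Fin N, j < k → x k < x j) :
    -(∑ j : Fin N,
        fderiv ℝ (fun y => fderiv ℝ Ω y (Pi.single j 1)) x (Pi.single j 1)) +
      (∑ j : Fin N, ∑ k ∈ Finset.univ.erase j,
        Real.pi ^ 2 * β * (β - 1) /
          (l ^ 2 * Real.sin (Real.pi * (x j - x k) / l) ^ 2)) * Ω x =
      (Real.pi * β / l) ^ 2 * (N * ((N : ℝ) ^ 2 - 1) / 3) * Ω x := by
  obtain ⟨hrange, horder⟩ := hx
  set c := π / l with hc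
  have hangle : ∀ u : ℝ, π * u / l = c * u := fun u => mul_div_right_comm π u l
  have hpos : ∀ a b, a < b → 0 < sin (c * (x a - x b)) := fun a b hab =>
    sin_pi_div_mul_sub_pos hl (hrange b).1 (hrange a).2 (horder a b hab)
  have hne : ∀ a b, a ≠ b → sin (c * (x a - x b)) ≠ 0 := fun a b => sin_mul_sub_ne_zero hpos
  have hΩexp : Ω =ᶠ[𝓝 x] fun y => exp (β * logJastrow c y) := by
    simp only [hangle] at hΩ
    exact (funext hΩ).symm ▸ prod_rpow_eventuallyEq_exp_logJastrow β hpos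
  have hpot : ∀ j, ∀ k ∈ univ.erase j,
      π ^ 2 * β * (β - 1) / (l ^ 2 * sin (π * (x j - x k) / l) ^ 2) =
        β * (β - 1) * c ^ 2 * (1 + cot (c * (x j - x k)) ^ 2) := by
    intro j k hk
    rw [hangle, ← one_div_sin_sq_eq_one_add_cot_sq (hne j k (ne_of_mem_erase hk).symm), hc]
    field_simp
  have hsq := sum_sq_sum_erase_cot_mul_sub hne
  have hpairs := sum_sum_erase_one (ι := Fin N)
  rw [sum_congr rfl fun j _ => fderiv_fderiv_single_of_eventuallyEq_exp_logJastrow hne hΩexp j,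
    sum_congr rfl fun j _ => sum_congr rfl (hpot j)]
  simp only [← mul_sum, sum_sub_distrib, sum_add_distrib, Fintype.card_fin] at hsq hpairs ⊢
  linear_combination (-(c ^ 2 * Ω x * β ^ 2)) * hsq + (c ^ 2 * Ω x * β ^ 2) * hpairs
end

section
/- Let ω be a symmetric real m×m matrix and let W(x) = −(1/2)⟨x, ωx⟩ for x ∈ ℝᵐ. Then for every smooth function f : ℝᵐ → ℂ and every x ∈ ℝᵐ, e^{−W(x)} · Δ(e^{W} f)(x) = Δf(x) − 2⟨ωx, ∇f(x)⟩ + (⟨ωx, ωx⟩ − trace ω) · f(x). -/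
open Finset

noncomputable def Amap (m : ℕ) (ω : Matrix (Fin m) (Fin m) ℝ) (i : Fin m) :
    (Fin m → ℝ) →L[ℝ] ℝ :=
  (ContinuousLinearMap.proj i).comp (LinearMap.toContinuousLinearMap ω.mulVecLin)

lemma Amap_apply (m : ℕ) (ω : Matrix (Fin m) (Fin m) ℝ) (i : Fin m) (v : Fin m → ℝ) :
    Amap m ω i v = ω.mulVec v i := rfl

noncomputable def Lw (m : ℕ) (ω : Matrix (Fin m) (Fin m) ℝ) (y : Fin m → ℝ) :
    (Fin m → ℝ) →L[ℝ] ℝ :=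
  (-(1/2) : ℝ) • ∑ j : Fin m, (y j • Amap m ω j + ω.mulVec y j • (ContinuousLinearMap.proj j))

lemma quad_hasFDerivAt (m : ℕ) (ω : Matrix (Fin m) (Fin m) ℝ) (y : Fin m → ℝ) :
    HasFDerivAt (fun z : Fin m → ℝ => ∑ i, z i * ω.mulVec z i)
      (∑ j : Fin m, (y j • Amap m ω j + ω.mulVec y j • (ContinuousLinearMap.proj j))) y := by
  apply HasFDerivAt.fun_sum
  intro i _
  exact ((ContinuousLinearMap.proj i).hasFDerivAt (x := y)).mul ((Amap m ω i).hasFDerivAt)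

lemma Lw_single (m : ℕ) (ω : Matrix (Fin m) (Fin m) ℝ) (hsymm : ω.IsSymm)
    (y : Fin m → ℝ) (i : Fin m) :
    Lw m ω y (Pi.single i 1) = -(ω.mulVec y i) := by
  have h : ((∑ j : Fin m, (y j • Amap m ω j + ω.mulVec y j • (ContinuousLinearMap.proj j)) :
      (Fin m → ℝ) →L[ℝ] ℝ)) (Pi.single i 1) = 2 * ω.mulVec y i := by
    rw [ContinuousLinearMap.sum_apply]
    simp only [ContinuousLinearMap.add_apply, ContinuousLinearMap.smul_apply,
      ContinuousLinearMap.proj_apply, Amap_apply, smul_eq_mul]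
    rw [Finset.sum_add_distrib]
    have h1 : ∑ j : Fin m, y j * ω.mulVec (Pi.single i 1) j = ω.mulVec y i := by
      simp only [Matrix.mulVec_single_one, Matrix.col_apply, mul_one]
      rw [Matrix.mulVec, dotProduct]
      refine Finset.sum_congr rfl fun j _ => ?_
      have := congrFun (congrFun hsymm i) j
      simp [Matrix.transpose_apply] at this
      rw [← this]; ring
    have h2 : ∑ j : Fin m, ω.mulVec y j * (Pi.single i 1 : Fin m → ℝ) j = ω.mulVec y i := by
      rw [Finset.sum_eq_single i] <;> simp +contextual [Pi.single_apply]
    rw [h1, h2]; ring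
  simp only [Lw, ContinuousLinearMap.smul_apply, h, smul_eq_mul]
  ring

theorem oscillator_conjugation_identity
    (m : ℕ) (ω : Matrix (Fin m) (Fin m) ℝ) (hsymm : ω.IsSymm)
    (W : (Fin m → ℝ) → ℝ)
    (hW : ∀ x, W x = -(1 / 2) * ∑ i : Fin m, x i * ω.mulVec x i)
    (f : (Fin m → ℝ) → ℂ) (hf : ContDiff ℝ (⊤ : ℕ∞) f) (x : Fin m → ℝ) :
    Complex.exp (-(W x : ℂ)) *
        (∑ i : Fin m,
          fderiv ℝ (fun y => fderiv ℝ (fun z => Complex.exp (W z : ℂ) * f z) y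
            (Pi.single i 1)) x (Pi.single i 1)) =
      (∑ i : Fin m,
          fderiv ℝ (fun y => fderiv ℝ f y (Pi.single i 1)) x (Pi.single i 1)) -
        2 * ∑ i : Fin m, (ω.mulVec x i : ℂ) * fderiv ℝ f x (Pi.single i 1) +
        (((∑ i : Fin m, ω.mulVec x i * ω.mulVec x i : ℝ) : ℂ) - (ω.trace : ℂ)) * f x := by
  -- derivative of W
  have hWd : ∀ y, HasFDerivAt W (Lw m ω y) y := by
    intro y
    have h0 := (quad_hasFDerivAt m ω y).const_mul (-(1/2) : ℝ)
    have hfun : (fun z : Fin m → ℝ => -(1/2) * ∑ i, z i * ω.mulVec z i) = W :=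
      funext fun z => (hW z).symm
    rw [hfun] at h0
    exact h0
  -- derivative of E z = exp (W z)
  set E : (Fin m → ℝ) → ℂ := fun z => Complex.exp (W z : ℂ) with hE
  have hEd : ∀ y, HasFDerivAt E
      (Complex.exp (W y : ℂ) • ((Complex.ofRealCLM : ℝ →L[ℝ] ℂ).comp (Lw m ω y))) y := by
    intro y
    exact (Complex.ofRealCLM.hasFDerivAt.comp y (hWd y)).cexp
  have hfd : ∀ y, HasFDerivAt f (fderiv ℝ f y) y :=
    fun y => (hf.differentiable (by simp) y).hasFDerivAt
  -- first derivative of g = E * f in direction e i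
  have hFi : ∀ i : Fin m,
      (fun y => fderiv ℝ (fun z => Complex.exp (W z : ℂ) * f z) y (Pi.single i 1)) =
      fun y => E y * (fderiv ℝ f y (Pi.single i 1) + (-(ω.mulVec y i : ℝ) : ℂ) * f y) := by
    intro i
    funext y
    have hg := ((hEd y).fun_mul (hfd y)).fderiv
    rw [show (fun z => Complex.exp ((W z : ℝ) : ℂ) * f z) = fun z => E z * f z from rfl, hg]
    simp only [ContinuousLinearMap.add_apply, ContinuousLinearMap.smul_apply,
      ContinuousLinearMap.comp_apply, Complex.ofRealCLM_apply, smul_eq_mul,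
      Lw_single m ω hsymm y i, hE]
    push_cast
    ring
  -- differentiability of y ↦ fderiv f y (e i)
  have hdiff2 : ∀ i : Fin m, DifferentiableAt ℝ
      (fun y => fderiv ℝ f y (Pi.single i 1)) x := by
    intro i
    have h1 : ContDiff ℝ (⊤ : ℕ∞) (fderiv ℝ f) := hf.fderiv_right le_rfl
    exact ((ContinuousLinearMap.apply ℝ ℂ (Pi.single i 1 : Fin m → ℝ)).differentiable.comp
      (h1.differentiable (by simp))).differentiableAt
  -- second derivative per coordinate
  have key : ∀ i : Fin m,
      fderiv ℝ (fun y => fderiv ℝ (fun z => Complex.exp (W z : ℂ) * f z) y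
        (Pi.single i 1)) x (Pi.single i 1) =
      E x * (fderiv ℝ (fun y => fderiv ℝ f y (Pi.single i 1)) x (Pi.single i 1)
        - 2 * (ω.mulVec x i : ℂ) * fderiv ℝ f x (Pi.single i 1)
        + ((ω.mulVec x i : ℂ) * (ω.mulVec x i : ℂ) - (ω i i : ℂ)) * f x) := by
    intro i
    rw [hFi i]
    -- derivative of c y = -(ω.mulVec y i) as complex
    have hcd : ∀ y, HasFDerivAt (fun y : Fin m → ℝ => (-(ω.mulVec y i : ℝ) : ℂ))
        ((Complex.ofRealCLM : ℝ →L[ℝ] ℂ).comp (-(Amap m ω i))) y := by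
      intro y
      have h2 := Complex.ofRealCLM.hasFDerivAt.comp y ((Amap m ω i).hasFDerivAt (x := y)).neg
      exact h2.congr_of_eventuallyEq (Filter.Eventually.of_forall fun z => by
        simp [Function.comp, Amap_apply])
    have ht1 : HasFDerivAt (fun y => fderiv ℝ f y (Pi.single i 1))
        (fderiv ℝ (fun y => fderiv ℝ f y (Pi.single i 1)) x) x :=
      (hdiff2 i).hasFDerivAt
    have hu : HasFDerivAt
        (fun y => fderiv ℝ f y (Pi.single i 1) + (-(ω.mulVec y i : ℝ) : ℂ) * f y)
        (fderiv ℝ (fun y => fderiv ℝ f y (Pi.single i 1)) x +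
          ((-(ω.mulVec x i : ℝ) : ℂ) • fderiv ℝ f x +
            f x • ((Complex.ofRealCLM : ℝ →L[ℝ] ℂ).comp (-(Amap m ω i))))) x :=
      ht1.add ((hcd x).mul (hfd x))
    have htot := ((hEd x).fun_mul hu).fderiv
    rw [htot]
    simp only [ContinuousLinearMap.add_apply, ContinuousLinearMap.smul_apply,
      ContinuousLinearMap.comp_apply, ContinuousLinearMap.neg_apply,
      Complex.ofRealCLM_apply, smul_eq_mul, Lw_single m ω hsymm x i,
      Amap_apply]
    have hsing : ω.mulVec (Pi.single i 1 : Fin m → ℝ) i = ω i i := by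
      simp [Matrix.mulVec_single]
    rw [hsing]
    push_cast
    ring
  -- assemble
  simp only [key]
  rw [← Finset.mul_sum, ← mul_assoc,
    show Complex.exp (-(W x : ℂ)) * E x = 1 by
      rw [hE]; rw [← Complex.exp_add]; simp, one_mul]
  rw [Matrix.trace]
  push_cast
  simp only [Finset.sum_add_distrib, Finset.sum_sub_distrib, Finset.mul_sum,
    Finset.sum_mul, sub_mul, Matrix.diag_apply]
  simp only [mul_assoc]
end

section
/- Fix β ∈ ℝ and N ∈ ℕ, and let Ω(x₁,…,x_N) = ∏_{1 ≤ j < k ≤ N} (x_j − x_k)^β on the open region x_N < x_{N−1} < ⋯ < x₁ in ℝ^N. Then Ω satisfies (−Σ_j ∂²/∂x_j² + β(β−1) Σ_{j ≠ k} 1/(x_j − x_k)²) Ω = 0, i.e. Ω is a zero-energy eigenfunction of the rational Calogero Hamiltonian. -/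
/-!
Where the coordinates are distinct, `∂ⱼ log Ω = β Sⱼ` with `Sⱼ = ∑_{k ≠ j} (xⱼ - xₖ)⁻¹`, and
`∂ⱼ Sⱼ = -∑_{k ≠ j} (xⱼ - xₖ)⁻²`, so `∂ⱼ² Ω = (β² Sⱼ² - β ∑_{k ≠ j} (xⱼ - xₖ)⁻²) Ω`.
Expanding `∑ⱼ Sⱼ²`, the three-body terms `(xⱼ - xₖ)⁻¹ (xⱼ - xₛ)⁻¹` cancel in cyclic triples,
leaving `∑ⱼ Sⱼ² = ∑_{j ≠ k} (xⱼ - xₖ)⁻²`; hence `∑ⱼ ∂ⱼ² Ω = β (β - 1) ∑_{j ≠ k} (xⱼ - xₖ)⁻² Ω`.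
-/

open Finset Function Filter Topology

theorem eventually_injective_nhds {ι X : Type*} [Finite ι] [TopologicalSpace X] [T2Space X]
    {x : ι → X} (hx : Injective x) : ∀ᶠ y in 𝓝 x, Injective y := by
  simp only [Injective, eventually_all]
  intro a b
  by_cases hab : a = b
  · exact .of_forall fun _ _ => hab
  · have hne : ∀ᶠ y : ι → X in 𝓝 x, y a ≠ y b :=
      (isOpen_ne_fun (continuous_apply a) (continuous_apply b)).mem_nhds (hx.ne hab)
    exact hne.mono fun y hy h => absurd h hy

variable {ι : Type*} [DecidableEq ι]

local notation "proj" => ContinuousLinearMap.proj (R := ℝ) (φ := fun _ : ι => ℝ)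

-- `Real.rpow` has the usual derivative at negative bases too, so distinct coordinates suffice.
theorem hasFDerivAt_prod_rpow_sub [Fintype ι] (β : ℝ) (P : Finset (ι × ι)) {y : ι → ℝ}
    (hy : ∀ p ∈ P, y p.1 ≠ y p.2) :
    HasFDerivAt (fun y : ι → ℝ => ∏ p ∈ P, (y p.1 - y p.2) ^ β)
      ((β * ∏ p ∈ P, (y p.1 - y p.2) ^ β) •
        ∑ p ∈ P, (y p.1 - y p.2)⁻¹ • (proj p.1 - proj p.2)) y := by
  have hfac : ∀ p ∈ P, HasFDerivAt (fun y : ι → ℝ => (y p.1 - y p.2) ^ β)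
      ((β * (y p.1 - y p.2) ^ (β - 1)) • (proj p.1 - proj p.2)) y := fun p hp =>
    ((proj p.1).hasFDerivAt.sub (proj p.2).hasFDerivAt).rpow_const
      (.inl (sub_ne_zero.2 (hy p hp)))
  refine (HasFDerivAt.finsetProd hfac).congr_fderiv ?_
  rw [smul_sum]
  refine sum_congr rfl fun p hp => ?_
  rw [smul_smul, smul_smul, ← mul_prod_erase P _ hp, Real.rpow_sub_one (sub_ne_zero.2 (hy p hp))]
  congr 1
  ring

theorem sum_lt_pairs_mul_single_sub [Fintype ι] [LinearOrder ι] {R : Type*} [CommRing R]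
    (f : ι → ι → R) (hf : ∀ a b, f b a = -f a b) (j : ι) :
    ∑ p ∈ univ.filter (fun p : ι × ι => p.1 < p.2),
      f p.1 p.2 * ((Pi.single j 1 : ι → R) p.1 - (Pi.single j 1 : ι → R) p.2) =
      ∑ k ∈ univ.erase j, f j k := by
  calc _ = ∑ k, ((if j < k then f j k else 0) - if k < j then f k j else 0) := by
        simp only [mul_sub, sum_sub_distrib]
        congr 1
        · rw [sum_filter, Fintype.sum_prod_type]
          simp only [Pi.single_apply, mul_ite, mul_one, mul_zero, ← ite_and,
            and_comm (a := _ < _)]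
          simp [ite_and]
        · rw [sum_filter, Fintype.sum_prod_type, sum_comm]
          simp only [Pi.single_apply, mul_ite, mul_one, mul_zero, ← ite_and,
            and_comm (a := _ < _)]
          simp [ite_and]
    _ = ∑ k ∈ univ.erase j, f j k := by
        rw [← sum_erase univ (a := j) (by simp)]
        refine sum_congr rfl fun k hk => ?_
        rcases lt_trichotomy j k with h | rfl | h
        · simp [h, h.not_gt]
        · simp at hk
        · simp [h, h.not_gt, hf k j]

section GroundState

variable [Fintype ι] [LinearOrder ι]

noncomputable def calogeroGroundState (β : ℝ) (y : ι → ℝ) : ℝ :=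
  ∏ p ∈ univ.filter (fun p : ι × ι => p.1 < p.2), (y p.1 - y p.2) ^ β

variable {β : ℝ} {y : ι → ℝ}

theorem hasFDerivAt_calogeroGroundState (hy : Injective y) :
    HasFDerivAt (calogeroGroundState β)
      ((β * calogeroGroundState β y) • ∑ p ∈ univ.filter (fun p : ι × ι => p.1 < p.2),
        (y p.1 - y p.2)⁻¹ • (proj p.1 - proj p.2)) y :=
  hasFDerivAt_prod_rpow_sub β _ fun _ hp => hy.ne (mem_filter.1 hp).2.ne

theorem fderiv_calogeroGroundState_single (hy : Injective y) (j : ι) :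
    fderiv ℝ (calogeroGroundState β) y (Pi.single j 1) =
      β * calogeroGroundState β y * ∑ k ∈ univ.erase j, (y j - y k)⁻¹ := by
  rw [(hasFDerivAt_calogeroGroundState hy).fderiv, ← sum_lt_pairs_mul_single_sub
    (fun a b => (y a - y b)⁻¹) (fun a b => by rw [← neg_sub, inv_neg]) j]
  simp

omit [LinearOrder ι] in
theorem hasFDerivAt_sum_inv_sub (hy : Injective y) (j : ι) :
    HasFDerivAt (fun y : ι → ℝ => ∑ k ∈ univ.erase j, (y j - y k)⁻¹)
      (∑ k ∈ univ.erase j, (-((y j - y k) ^ 2)⁻¹) • (proj j - proj k)) y :=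
  HasFDerivAt.fun_sum fun k hk =>
    (hasDerivAt_inv (sub_ne_zero.2 (hy.ne (ne_of_mem_erase hk).symm))).comp_hasFDerivAt y
      ((proj j).hasFDerivAt.sub (proj k).hasFDerivAt)

theorem fderiv_fderiv_calogeroGroundState_single (hy : Injective y) (j : ι) :
    fderiv ℝ (fun y => fderiv ℝ (calogeroGroundState β) y (Pi.single j 1)) y (Pi.single j 1) =
      β ^ 2 * calogeroGroundState β y * (∑ k ∈ univ.erase j, (y j - y k)⁻¹) ^ 2 -
        β * calogeroGroundState β y * ∑ k ∈ univ.erase j, ((y j - y k) ^ 2)⁻¹ := by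
  have hfirst : (fun y => fderiv ℝ (calogeroGroundState β) y (Pi.single j 1)) =ᶠ[𝓝 y]
      fun y => β * calogeroGroundState β y * ∑ k ∈ univ.erase j, (y j - y k)⁻¹ :=
    (eventually_injective_nhds hy).mono fun _ hz => fderiv_calogeroGroundState_single hz j
  have hsum : (∑ k ∈ univ.erase j, (-((y j - y k) ^ 2)⁻¹) • (proj j - proj k)) (Pi.single j 1) =
      -∑ k ∈ univ.erase j, ((y j - y k) ^ 2)⁻¹ := by
    rw [_root_.sum_apply, ← sum_neg_distrib]
    exact sum_congr rfl fun k hk => by simp [ne_of_mem_erase hk]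
  rw [hfirst.fderiv_eq, (((hasFDerivAt_calogeroGroundState hy).const_mul β).fun_mul
    (hasFDerivAt_sum_inv_sub hy j)).fderiv]
  simp only [add_apply, smul_apply, smul_eq_mul, hsum,
    ← (hasFDerivAt_calogeroGroundState hy).fderiv, fderiv_calogeroGroundState_single hy]
  ring

end GroundState

section ThreeBody

variable [Fintype ι] {K : Type*} [Field K]

lemma inv_sub_mul_inv_sub_add_cyclic {a b c : K} (hab : a ≠ b) (hbc : b ≠ c) (hca : c ≠ a) :
    (a - b)⁻¹ * (a - c)⁻¹ + (b - c)⁻¹ * (b - a)⁻¹ + (c - a)⁻¹ * (c - b)⁻¹ = 0 := by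
  rw [← neg_sub a b, ← neg_sub b c, ← neg_sub c a]
  have := sub_ne_zero.2 hab
  have := sub_ne_zero.2 hbc
  have := sub_ne_zero.2 hca
  field_simp
  ring

theorem sum_sq_sum_inv_sub [CharZero K] {x : ι → K} (hx : Injective x) :
    ∑ j, (∑ k ∈ univ.erase j, (x j - x k)⁻¹) ^ 2 =
      ∑ j, ∑ k ∈ univ.erase j, ((x j - x k) ^ 2)⁻¹ := by
  -- `(x j - x j)⁻¹ = 0`, so the sums over `univ.erase j` extend to `univ` and the degenerate
  -- triples drop out of `g`; the cyclic sums of `g` vanish and `rot` permutes the triples.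
  set a : ι → ι → K := fun j k => (x j - x k)⁻¹
  have ha : ∀ j, a j j = 0 := by simp [a]
  let g : ι × ι × ι → K := fun t => if t.2.1 = t.2.2 then 0 else a t.1 t.2.1 * a t.1 t.2.2
  let rot : ι × ι × ι ≃ ι × ι × ι := (Equiv.prodComm _ _).trans (Equiv.prodAssoc _ _ _)
  have hcyc : ∀ t, g t + g (rot t) + g (rot (rot t)) = 0 := by
    rintro ⟨j, k, s⟩
    by_cases hjk : j = k <;> by_cases hks : k = s <;> by_cases hsj : s = j <;>
      simp_all [g, rot, a, inv_sub_mul_inv_sub_add_cyclic, hx.ne]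
  have hg : ∑ t, g t = 0 := by
    have h3 : (3 : K) * ∑ t, g t = ∑ t, (g t + g (rot t) + g (rot (rot t))) := by
      rw [sum_add_distrib, sum_add_distrib, Equiv.sum_comp rot g,
        Equiv.sum_comp rot (fun t => g (rot t)), Equiv.sum_comp rot g]
      ring
    simpa [hcyc] using h3
  have hdiag : ∀ j k, ∑ s, a j k * a j s = a j k ^ 2 + ∑ s, g (j, k, s) := by
    intro j k
    rw [show a j k ^ 2 = ∑ s, if k = s then a j k * a j s else 0 by simp [sq],
      ← sum_add_distrib]
    refine sum_congr rfl fun s _ => ?_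
    split_ifs with h <;> simp [g, h]
  calc ∑ j, (∑ k ∈ univ.erase j, a j k) ^ 2
      = ∑ j, ∑ k, ∑ s, a j k * a j s := by
        simp only [sum_erase _ (ha _), sq, sum_mul_sum]
    _ = ∑ j, ∑ k, a j k ^ 2 + ∑ t, g t := by
        simp only [hdiag, sum_add_distrib, Fintype.sum_prod_type]
    _ = ∑ j, ∑ k ∈ univ.erase j, ((x j - x k) ^ 2)⁻¹ := by
        simp only [hg, add_zero, a, inv_pow]
        exact sum_congr rfl fun j _ => (sum_erase _ (by simp)).symm

end ThreeBody

theorem rational_Calogero_zero_energy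
    (β : ℝ) (N : ℕ)
    (Ω : (Fin N → ℝ) → ℝ)
    (hΩ : ∀ x, Ω x = ∏ p ∈ Finset.univ.filter (fun p : Fin N × Fin N => p.1 < p.2),
      (x p.1 - x p.2) ^ β)
    (x : Fin N → ℝ)
    (hx : ∀ j k : Fin N, j < k → x k < x j) :
    -(∑ j : Fin N,
        fderiv ℝ (fun y => fderiv ℝ Ω y (Pi.single j 1)) x (Pi.single j 1)) +
      β * (β - 1) * (∑ j : Fin N, ∑ k ∈ Finset.univ.erase j,
        1 / (x j - x k) ^ 2) * Ω x = 0 := by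
  obtain rfl : Ω = calogeroGroundState β := funext hΩ
  have hinj : Injective x := StrictAnti.injective hx
  simp only [fderiv_fderiv_calogeroGroundState_single hinj, sum_sub_distrib, ← mul_sum, one_div]
  rw [sum_sq_sum_inv_sub hinj]
  ring
end

section
/- Let D_j = ∂_j − W_j, for j in Fin N, be the Dunkl-type operators acting on smooth functions on an open set U ⊆ ℝ^N, where W_j(x) = (πβ/l) Σ_{k≠j} cot(π(x_j−x_k)/l). If a positive smooth function Ω on U satisfies D_j Ω = 0 for all j, then for every smooth g on U, Σ_j (−∂_j − W_j)((∂_j − W_j)(Ω g)) = −Σ_j Ω · (∂_j² g + 2 (∂_j ln Ω)(∂_j g)). -/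
open Finset

theorem dunkl_ground_state_factorization
    (N : ℕ) (l β : ℝ) (hl : 0 < l)
    (U : Set (Fin N → ℝ)) (hU : IsOpen U)
    (W : Fin N → (Fin N → ℝ) → ℝ)
    (hW : ∀ j x, W j x = (Real.pi * β / l) *
      ∑ k ∈ Finset.univ.erase j, Real.cot (Real.pi * (x j - x k) / l))
    (Ω : (Fin N → ℝ) → ℝ) (hΩpos : ∀ x ∈ U, 0 < Ω x)
    (hΩsmooth : ContDiffOn ℝ (⊤ : ℕ∞) Ω U)
    (hD : ∀ x ∈ U, ∀ j : Fin N,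
      fderiv ℝ Ω x (Pi.single j 1) - W j x * Ω x = 0)
    (g : (Fin N → ℝ) → ℝ) (hg : ContDiffOn ℝ (⊤ : ℕ∞) g U)
    (x : Fin N → ℝ) (hx : x ∈ U) :
    (∑ j : Fin N,
        (-(fderiv ℝ (fun y => fderiv ℝ (fun z => Ω z * g z) y (Pi.single j 1) -
              W j y * (Ω y * g y)) x (Pi.single j 1)) -
          W j x * (fderiv ℝ (fun z => Ω z * g z) x (Pi.single j 1) -
            W j x * (Ω x * g x)))) =
      -(∑ j : Fin N, Ω x *
        (fderiv ℝ (fun y => fderiv ℝ g y (Pi.single j 1)) x (Pi.single j 1) +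
          2 * fderiv ℝ (fun y => Real.log (Ω y)) x (Pi.single j 1) *
            fderiv ℝ g x (Pi.single j 1))) := by
  rw [← Finset.sum_neg_distrib]
  refine Finset.sum_congr rfl fun j _ => ?_
  -- basic differentiability facts
  have hΩx : DifferentiableAt ℝ Ω x :=
    (hΩsmooth.contDiffAt (hU.mem_nhds hx)).differentiableAt (by simp)
  have hgx : DifferentiableAt ℝ g x :=
    (hg.contDiffAt (hU.mem_nhds hx)).differentiableAt (by simp)
  -- key identity: on U, D_j(Ω·g) = Ω·∂_j g
  have key : ∀ y ∈ U,
      fderiv ℝ (fun z => Ω z * g z) y (Pi.single j 1) - W j y * (Ω y * g y)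
        = Ω y * fderiv ℝ g y (Pi.single j 1) := by
    intro y hy
    have hΩy : DifferentiableAt ℝ Ω y :=
      (hΩsmooth.contDiffAt (hU.mem_nhds hy)).differentiableAt (by simp)
    have hgy : DifferentiableAt ℝ g y :=
      (hg.contDiffAt (hU.mem_nhds hy)).differentiableAt (by simp)
    have hmul := fderiv_fun_mul hΩy hgy
    have hD' : fderiv ℝ Ω y (Pi.single j 1) = W j y * Ω y := by
      have := hD y hy j; linarith
    rw [hmul]
    simp only [ContinuousLinearMap.add_apply, ContinuousLinearMap.smul_apply,
      smul_eq_mul, hD']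
    ring
  -- the eventual equality
  have hev : (fun y => fderiv ℝ (fun z => Ω z * g z) y (Pi.single j 1) -
      W j y * (Ω y * g y)) =ᶠ[nhds x] fun y => Ω y * fderiv ℝ g y (Pi.single j 1) := by
    filter_upwards [hU.mem_nhds hx] with y hy using key y hy
  -- differentiability of y ↦ ∂_j g y at x
  have hg1 : ContDiffAt ℝ (⊤ : ℕ∞) (fderiv ℝ g) x :=
    (hg.contDiffAt (hU.mem_nhds hx)).fderiv_right (by simp)
  have hdg : DifferentiableAt ℝ (fun y => fderiv ℝ g y (Pi.single j 1)) x :=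
    (hg1.differentiableAt (by simp)).clm_apply (differentiableAt_const _)
  -- compute outer derivative
  have houter : fderiv ℝ (fun y => fderiv ℝ (fun z => Ω z * g z) y (Pi.single j 1) -
        W j y * (Ω y * g y)) x (Pi.single j 1)
      = W j x * Ω x * fderiv ℝ g x (Pi.single j 1) +
        Ω x * fderiv ℝ (fun y => fderiv ℝ g y (Pi.single j 1)) x (Pi.single j 1) := by
    rw [hev.fderiv_eq, fderiv_fun_mul hΩx hdg]
    have hD' : fderiv ℝ Ω x (Pi.single j 1) = W j x * Ω x := by
      have := hD x hx j; linarith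
    simp only [ContinuousLinearMap.add_apply, ContinuousLinearMap.smul_apply,
      smul_eq_mul, hD']
    ring
  -- derivative of log Ω
  have hlog : fderiv ℝ (fun y => Real.log (Ω y)) x (Pi.single j 1) = W j x := by
    have hΩne : Ω x ≠ 0 := ne_of_gt (hΩpos x hx)
    have := (hΩx.hasFDerivAt.log hΩne).fderiv
    rw [this]
    have hD' : fderiv ℝ Ω x (Pi.single j 1) = W j x * Ω x := by
      have := hD x hx j; linarith
    simp only [ContinuousLinearMap.smul_apply, smul_eq_mul, hD']
    field_simp
  rw [houter, hlog, key x hx]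
  ring
end
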